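/- Let T be a commutative ring, let R be a T-algebra all of whose idempotents are central (a normal algebra), let n ≥ 1, and let K = T(n,R) be the algebra of upper triangular n×n matrices over R. Then every T-algebra automorphism φ of K is a product of an inner automorphism and a ring automorphism: there exist an invertible element u of K and a T-algebra automorphism α of R such that φ(A) = u · ᾱ(A) · u⁻¹ for all A ∈ K, where ᾱ applies α entrywise. -/

import Mathlib

/-- The `T`-subalgebra of upper triangular `n × n` matrices over `R`. -/
def triangularSubalgebra (T R : Type*) [CommRing T] [Ring R] [Algebra T R] (n : ℕ) :
    Subalgebra T (Matrix (Fin n) (Fin n) R) where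
  carrier := {A | ∀ ⦃i j : Fin n⦄, j < i → A i j = 0}
  add_mem' := fun {A B} hA hB i j hij => by
    simp [Matrix.add_apply, hA hij, hB hij]
  mul_mem' := fun {A B} hA hB i j hij => by
    simp only [Matrix.mul_apply]
    refine Finset.sum_eq_zero fun k _ => ?_
    rcases lt_or_ge k i with h | h
    · rw [hA h, zero_mul]
    · rw [hB (lt_of_lt_of_le hij h), mul_zero]
  algebraMap_mem' := fun t i j hij => by
    simp [Matrix.algebraMap_matrix_apply, (ne_of_lt hij).symm]

/-- The set of strictly upper triangular matrices inside the triangular matrix algebra. -/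
def strictlyUpper (T R : Type*) [CommRing T] [Ring R] [Algebra T R] (n : ℕ) :
    Set (triangularSubalgebra T R n) :=
  {A | ∀ i j : Fin n, j ≤ i → (A : Matrix (Fin n) (Fin n) R) i j = 0}

/-- The entrywise action of an automorphism `α` of `R` on the triangular matrix algebra. -/
def entrywiseMap (T R : Type*) [CommRing T] [Ring R] [Algebra T R] (n : ℕ)
    (α : R ≃ₐ[T] R) (A : triangularSubalgebra T R n) : triangularSubalgebra T R n :=
  ⟨Matrix.of fun i j => α ((A : Matrix (Fin n) (Fin n) R) i j),
    fun i j hij => by simp [Matrix.of_apply, A.2 hij]⟩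

/-!
The images `fᵢ = φ(Eᵢᵢ)` of the diagonal matrix units form a complete family of orthogonal
idempotents, hence so do their diagonals `dᵢ ∈ Rⁿ`. The element `u = ∑ᵢ diag(dᵢ) fᵢ` satisfies
`u fⱼ = diag(dⱼ) u`, and its diagonal is `∑ᵢ dᵢ² = 1`, so it is unipotent, hence a unit. Thus
`ψ = u φ(·) u⁻¹` sends each `Eᵢᵢ` to the diagonal idempotent `diag(dᵢ)`. By normality the entries
`dᵢ k` are central. Since `ψ` preserves `Eᵢᵢ K Eⱼⱼ = 0` for `j < i` and the normality of the
corners `Eᵢᵢ K Eᵢᵢ ≅ R`, we get `dᵢ k · dⱼ l = 0` for `j < i`, `k ≤ l`, and `dᵢ k · dᵢ l = 0`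
for `k ≠ l`; with `∑ᵢ dᵢ k = 1` this forces `dᵢ k = δᵢₖ`, so `ψ` fixes every `Eᵢᵢ`.

An automorphism fixing every `Eᵢᵢ` preserves each Peirce piece `R Eᵢⱼ` (`i ≤ j`) and acts on it
by a bijection `aᵢⱼ` of `R` with `aᵢₖ(rs) = aᵢⱼ(r) aⱼₖ(s)`. Hence `α = a₀₀` is an automorphism
of `R`, `bⱼ = a₀ⱼ(1)` is a unit, and `aᵢⱼ(r) = bᵢ⁻¹ α(r) bⱼ`: the automorphism is `ᾱ` followed
by conjugation by `diag(b)⁻¹`.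
-/

theorem eq_piSingle_one_of_mul_eq_zero {R : Type*} [Semiring R] {n : ℕ} {d : Fin n → Fin n → R}
    (hcomm : ∀ i j k l, Commute (d i k) (d j l)) (hsum : ∀ k, ∑ i, d i k = 1)
    (hlower : ∀ i j k l, j < i → k ≤ l → d i k * d j l = 0)
    (hrow : ∀ i k l, k < l → d i k * d i l = 0) (i : Fin n) :
    d i = Pi.single i 1 := by
  have hrow' : ∀ i k l, k ≠ l → d i k * d i l = 0 := fun i k l hkl => by
    rcases hkl.lt_or_gt with h | h
    · exact hrow i k l h
    · rw [(hcomm i i k l).eq]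
      exact hrow i l k h
  have hupper : ∀ i k, i < k → d i k = 0 := fun i => by
    induction i using WellFoundedLT.induction with
    | _ i ih =>
      intro k hik
      calc d i k = ∑ j, d i k * d j i := by rw [← Finset.mul_sum, hsum, mul_one]
      _ = 0 := Finset.sum_eq_zero fun j _ => by
        rcases lt_trichotomy j i with h | rfl | h
        · rw [ih j h i h, mul_zero]
        · exact hrow' j k j hik.ne'
        · rw [(hcomm i j k i).eq]
          exact hlower j i i k h hik.le
  induction i using WellFoundedGT.induction with
  | _ i ih =>
    have hii : d i i = 1 := by
      rw [← hsum i, Finset.sum_eq_single i (fun j _ hj => ?_) (by simp)]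
      rcases hj.lt_or_gt with h | h
      · exact hupper j i h
      · rw [ih j h, Pi.single_eq_of_ne h.ne]
    funext k
    rcases eq_or_ne k i with rfl | hki
    · rw [hii, Pi.single_eq_same]
    · rw [Pi.single_eq_of_ne hki, ← mul_one (d i k), ← hii, hrow' i k i hki]

namespace triangularSubalgebra

variable {T R : Type*} [CommRing T] [Ring R] [Algebra T R] {n : ℕ}

local notation "𝒯" => triangularSubalgebra T R n

def single (i j : Fin n) (h : i ≤ j) : R →ₗ[T] 𝒯 where
  toFun r := ⟨Matrix.single i j r, fun _ _ hba =>
    Matrix.single_apply_of_ne _ _ _ _ _ fun ⟨ha, hb⟩ => (ha ▸ hb ▸ hba).not_ge h⟩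
  map_add' r s := Subtype.ext (Matrix.single_add i j r s)
  map_smul' t r := Subtype.ext (Matrix.smul_single t i j r).symm

def diagonal : (Fin n → R) →+* 𝒯 :=
  (Matrix.diagonalRingHom (Fin n) R).codRestrict (triangularSubalgebra T R n)
    fun d _ _ hba => Matrix.diagonal_apply_ne d hba.ne'

def diag : 𝒯 →+* (Fin n → R) where
  toFun A k := A.1 k k
  map_one' := funext fun k => Matrix.one_apply_eq k
  map_zero' := rfl
  map_add' _ _ := rfl
  map_mul' A B := funext fun k => by
    change (A.1 * B.1) k k = A.1 k k * B.1 k k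
    rw [Matrix.mul_apply, Finset.sum_eq_single k _ (by simp)]
    intro c _ hc
    rcases hc.lt_or_gt with h | h
    · rw [A.2 h, zero_mul]
    · rw [B.2 h, mul_zero]

def diagIdem (i : Fin n) : 𝒯 := diagonal (Pi.single i 1)

@[simp] lemma coe_single (i j : Fin n) (h : i ≤ j) (r : R) :
    (single (T := T) i j h r).1 = Matrix.single i j r := rfl

@[simp] lemma coe_diagonal (d : Fin n → R) : (diagonal (T := T) d).1 = Matrix.diagonal d := rfl

@[simp] lemma diag_apply (A : 𝒯) (k : Fin n) : diag A k = A.1 k k := rfl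

@[simp] lemma diag_diagonal (d : Fin n → R) : diag (diagonal (T := T) d) = d :=
  funext fun k => Matrix.diagonal_apply_eq d k

lemma diagonal_injective : Function.Injective (diagonal (T := T) (R := R) (n := n)) :=
  fun _ _ h => Matrix.diagonal_injective (congrArg Subtype.val h)

lemma single_injective (i j : Fin n) (h : i ≤ j) :
    Function.Injective (single (T := T) (R := R) i j h) :=
  fun r s hrs => by simpa using congrArg (fun A : 𝒯 => A.1 i j) hrs

@[simp] lemma single_eq_zero_iff {i j : Fin n} {h : i ≤ j} {r : R} :
    single (T := T) i j h r = 0 ↔ r = 0 :=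
  (injective_iff_map_eq_zero' _).1 (single_injective i j h) r

lemma single_mul_single {i j k : Fin n} (hij : i ≤ j) (hjk : j ≤ k) (r s : R) :
    single (T := T) i j hij r * single j k hjk s = single i k (hij.trans hjk) (r * s) :=
  Subtype.ext (Matrix.single_mul_single_same r i j k s)

lemma single_mul_single_of_ne {i j k l : Fin n} (hjk : j ≠ k) (hij : i ≤ j) (hkl : k ≤ l)
    (r s : R) :
    single (T := T) i j hij r * single k l hkl s = 0 :=
  Subtype.ext (Matrix.single_mul_single_of_ne r i j k hjk s)

lemma diagonal_mul_mul_diagonal_apply (d d' : Fin n → R) (A : 𝒯) (a b : Fin n) :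
    (diagonal d * A * diagonal d' : 𝒯).1 a b = d a * A.1 a b * d' b := by
  change (Matrix.diagonal d * A.1 * Matrix.diagonal d') a b = _
  rw [Matrix.mul_diagonal, Matrix.diagonal_mul]

lemma diagonal_mul_single_mul_diagonal (d d' : Fin n → R) {k l : Fin n} (h : k ≤ l) (r : R) :
    (diagonal d * single k l h r * diagonal d' : 𝒯) = single k l h (d k * r * d' l) := by
  ext a b
  rw [diagonal_mul_mul_diagonal_apply, coe_single, coe_single, Matrix.single_apply,
    Matrix.single_apply]
  split_ifs with hab
  · rw [hab.1, hab.2]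
  · simp

lemma diagIdem_mul_mul_diagIdem {i j : Fin n} (h : i ≤ j) (A : 𝒯) :
    diagIdem i * A * diagIdem j = single i j h (A.1 i j) := by
  ext a b
  rw [diagIdem, diagIdem, diagonal_mul_mul_diagonal_apply, coe_single, Matrix.single_apply,
    Pi.single_apply, Pi.single_apply]
  rcases eq_or_ne a i with rfl | ha <;> rcases eq_or_ne b j with rfl | hb <;> simp [*, Ne.symm]

lemma diagIdem_mul_mul_diagIdem_of_lt {i j : Fin n} (h : j < i) (A : 𝒯) :
    diagIdem i * A * diagIdem j = 0 := by
  ext a b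
  rw [diagIdem, diagIdem, diagonal_mul_mul_diagonal_apply, Pi.single_apply, Pi.single_apply]
  by_cases ha : a = i <;> by_cases hb : b = j <;> simp [ha, hb, A.2 h]

lemma diagIdem_mul_mul_diagIdem_apply (i j : Fin n) (A : 𝒯) :
    (diagIdem i * A * diagIdem j).1 i j = A.1 i j := by
  simp [diagIdem, diagonal_mul_mul_diagonal_apply]

lemma completeOrthogonalIdempotents_diagIdem :
    CompleteOrthogonalIdempotents (diagIdem (T := T) (R := R) (n := n)) :=
  (CompleteOrthogonalIdempotents.single fun _ : Fin n => R).map (diagonal : (Fin n → R) →+* 𝒯)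

lemma pow_apply_eq_zero_of_mem_strictlyUpper {N : 𝒯} (hN : N ∈ strictlyUpper T R n) (m : ℕ)
    {a b : Fin n} (hab : b.1 < a.1 + m) : (N ^ m).1 a b = 0 := by
  induction m generalizing b with
  | zero => exact Matrix.one_apply_ne (Fin.ne_of_val_ne (by omega))
  | succ m ih =>
    change ((N ^ m).1 * N.1) a b = 0
    rw [Matrix.mul_apply]
    refine Finset.sum_eq_zero fun c _ => ?_
    rcases lt_or_ge c.1 (a.1 + m) with hc | hc
    · rw [ih hc, zero_mul]
    · rw [hN c b (by rw [Fin.le_def]; omega), mul_zero]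

lemma isNilpotent_of_mem_strictlyUpper {N : 𝒯} (hN : N ∈ strictlyUpper T R n) :
    IsNilpotent N :=
  ⟨n, Subtype.ext <| funext₂ fun a b =>
    pow_apply_eq_zero_of_mem_strictlyUpper hN n (by omega)⟩

lemma isUnit_of_diag_eq_one {A : 𝒯} (hA : diag A = 1) : IsUnit A := by
  have hA1 : A - 1 ∈ strictlyUpper T R n := fun i j hji => by
    obtain rfl | hlt := hji.eq_or_lt
    · simpa [sub_eq_zero] using congrFun hA _
    · exact (A - 1).2 hlt
  simpa using (isNilpotent_of_mem_strictlyUpper hA1).isUnit_one_add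

theorem exists_unit_conj_eq_diagonal_diag {f : Fin n → 𝒯}
    (hf : CompleteOrthogonalIdempotents f) :
    ∃ u : 𝒯ˣ, ∀ i, (↑u * f i * ↑u⁻¹ : 𝒯) = diagonal (diag (f i)) := by
  classical
  set D : Fin n → 𝒯 := fun i => diagonal (diag (f i))
  have hd : CompleteOrthogonalIdempotents (diag ∘ f) := hf.map diag
  have hD : CompleteOrthogonalIdempotents D := hd.map (diagonal : (Fin n → R) →+* 𝒯)
  set u := ∑ i, D i * f i
  have hu : IsUnit u := isUnit_of_diag_eq_one <| by
    have hidem : ∀ i, diag (f i) * diag (f i) = diag (f i) := fun i => (hd.idem i).eq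
    simpa only [u, D, map_sum, map_mul, diag_diagonal, hidem, Function.comp_apply] using hd.complete
  have hconj : ∀ j, u * f j = D j * u := fun j => by
    simp only [u, Finset.sum_mul, Finset.mul_sum, mul_assoc, hf.mul_eq, ← mul_assoc (D j),
      hD.mul_eq]
    simp
  refine ⟨hu.unit, fun j => ?_⟩
  rw [hu.unit_spec, hconj, mul_assoc, hu.mul_val_inv, mul_one]

lemma commute_diagIdem_mul_mul_diagIdem (hR : ∀ e : R, IsIdempotentElem e → ∀ r, Commute e r)
    (i : Fin n) {x : 𝒯} (hx : IsIdempotentElem (diagIdem i * x * diagIdem i)) (y : 𝒯) :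
    Commute (diagIdem i * x * diagIdem i) (diagIdem i * y * diagIdem i) := by
  rw [diagIdem_mul_mul_diagIdem le_rfl] at hx ⊢
  rw [diagIdem_mul_mul_diagIdem le_rfl]
  have hr : IsIdempotentElem (x.1 i i) :=
    single_injective i i le_rfl ((single_mul_single le_rfl le_rfl _ _).symm.trans hx)
  rw [Commute, SemiconjBy, single_mul_single, single_mul_single, (hR _ hr _).eq]

lemma commute_map_diagIdem_mul_mul (hR : ∀ e : R, IsIdempotentElem e → ∀ r, Commute e r)
    (ψ : 𝒯 ≃+* 𝒯) (i : Fin n) {x : 𝒯}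
    (hx : IsIdempotentElem (ψ (diagIdem i) * x * ψ (diagIdem i))) (y : 𝒯) :
    Commute (ψ (diagIdem i) * x * ψ (diagIdem i)) (ψ (diagIdem i) * y * ψ (diagIdem i)) := by
  have hcorner : ∀ z : 𝒯,
      ψ (diagIdem i) * z * ψ (diagIdem i) = ψ (diagIdem i * ψ.symm z * diagIdem i) :=
    fun z => by simp only [map_mul, RingEquiv.apply_symm_apply]
  rw [hcorner] at hx ⊢
  rw [hcorner]
  refine (commute_diagIdem_mul_mul_diagIdem hR i ?_ _).map ψ
  simpa using hx.map ψ.symm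

theorem map_diagIdem_eq_diagIdem (hR : ∀ e : R, IsIdempotentElem e → ∀ r, Commute e r)
    (ψ : 𝒯 ≃+* 𝒯) (hψ : ∀ i, ∃ d, ψ (diagIdem i) = diagonal d) (i : Fin n) :
    ψ (diagIdem i) = diagIdem i := by
  choose d hd using hψ
  have hdc : CompleteOrthogonalIdempotents d := by
    rw [← CompleteOrthogonalIdempotents.map_injective_iff _ (diagonal_injective (T := T))]
    convert completeOrthogonalIdempotents_diagIdem.map (ψ : 𝒯 →+* 𝒯) using 1
    exact funext fun i => (hd i).symm
  have hidem : ∀ i k, IsIdempotentElem (d i k) := fun i k => congrFun (hdc.idem i) k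
  have hsum : ∀ k, ∑ i, d i k = 1 := fun k => by
    simpa using congrFun hdc.complete k
  have hlower : ∀ i j k l, j < i → k ≤ l → d i k * d j l = 0 := fun i j k l hji hkl => by
    have h0 : (diagonal (d i) * single k l hkl 1 * diagonal (d j) : 𝒯) = 0 := by
      rw [← hd, ← hd, ← ψ.apply_symm_apply (single k l hkl 1 : 𝒯), ← map_mul, ← map_mul,
        diagIdem_mul_mul_diagIdem_of_lt hji, map_zero]
    simpa [diagonal_mul_single_mul_diagonal] using h0
  have hrow : ∀ i k l, k < l → d i k * d i l = 0 := fun i k l hkl => by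
    have hcomm := commute_map_diagIdem_mul_mul hR ψ i (x := single k k le_rfl 1) ?_
      (single k l hkl.le 1)
    · rw [hd, diagonal_mul_single_mul_diagonal, diagonal_mul_single_mul_diagonal] at hcomm
      have := hcomm.eq
      rw [single_mul_single, single_mul_single_of_ne hkl.ne'] at this
      simpa [← mul_assoc, (hidem i k).eq] using this
    · rw [hd, diagonal_mul_single_mul_diagonal, IsIdempotentElem, single_mul_single]
      simp [(hidem i k).eq]
  rw [hd, eq_piSingle_one_of_mul_eq_zero (fun i j k l => hR _ (hidem i k) _) hsum hlower hrow]
  rfl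

section FixingDiagIdem

variable (ψ : triangularSubalgebra T R n ≃ₐ[T] triangularSubalgebra T R n)

def entryMap (i j : Fin n) (h : i ≤ j) : R →ₗ[T] R where
  toFun r := (ψ (single i j h r)).1 i j
  map_add' r s := by simp
  map_smul' t r := by simp

variable {ψ} (hψ : ∀ i, ψ (diagIdem i) = diagIdem i)
include hψ

lemma apply_eq_entryMap {i j : Fin n} (h : i ≤ j) (A : 𝒯) :
    (ψ A).1 i j = entryMap ψ i j h (A.1 i j) := by
  rw [← diagIdem_mul_mul_diagIdem_apply i j (ψ A), ← hψ i, ← hψ j, ← map_mul, ← map_mul,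
    diagIdem_mul_mul_diagIdem h]
  rfl

lemma map_single {i j : Fin n} (h : i ≤ j) (r : R) :
    ψ (single i j h r) = single i j h (entryMap ψ i j h r) := by
  have h' := diagIdem_mul_mul_diagIdem h (ψ (single i j h r))
  rwa [← hψ i, ← hψ j, ← map_mul, ← map_mul, diagIdem_mul_mul_diagIdem h, coe_single,
    Matrix.single_apply_same] at h'

lemma entryMap_mul {i j k : Fin n} (hij : i ≤ j) (hjk : j ≤ k) (r s : R) :
    entryMap ψ i k (hij.trans hjk) (r * s) = entryMap ψ i j hij r * entryMap ψ j k hjk s := by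
  apply single_injective (T := T) i k (hij.trans hjk)
  rw [← map_single hψ, ← single_mul_single, map_mul, map_single hψ, map_single hψ,
    single_mul_single]

lemma entryMap_one (i : Fin n) : entryMap ψ i i le_rfl 1 = 1 := by
  have := apply_eq_entryMap hψ (le_refl i) (diagIdem i)
  rw [hψ] at this
  simpa [diagIdem] using this.symm

lemma entryMap_bijective {i j : Fin n} (h : i ≤ j) : Function.Bijective (entryMap ψ i j h) := by
  refine ⟨fun r s hrs => single_injective (T := T) i j h (ψ.injective ?_), fun r => ?_⟩
  · rw [map_single hψ, map_single hψ, hrs]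
  · refine ⟨(ψ.symm (single i j h r)).1 i j, ?_⟩
    rw [← apply_eq_entryMap hψ, AlgEquiv.apply_symm_apply, coe_single, Matrix.single_apply_same]

theorem exists_unit_eq_conj_entrywiseMap (hn : 1 ≤ n) :
    ∃ (V : 𝒯ˣ) (α : R ≃ₐ[T] R), ∀ A : 𝒯, ψ A = ↑V * entrywiseMap T R n α A * ↑V⁻¹ := by
  set o : Fin n := ⟨0, hn⟩
  have ho : ∀ j, o ≤ j := fun j => Nat.zero_le j.1
  set α : R ≃ₐ[T] R := AlgEquiv.ofBijective
    (AlgHom.ofLinearMap (entryMap ψ o o le_rfl) (entryMap_one hψ o)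
      (entryMap_mul hψ le_rfl le_rfl)) (entryMap_bijective hψ le_rfl)
  set b : Fin n → R := fun j => entryMap ψ o j (ho j) 1
  have hαb : ∀ j r, entryMap ψ o j (ho j) r = α r * b j := fun j r => by
    have := entryMap_mul hψ le_rfl (ho j) r 1
    rwa [mul_one] at this
  have hbi : ∀ i j (h : i ≤ j) r, b i * entryMap ψ i j h r = entryMap ψ o j (ho j) r :=
    fun i j h r => by simpa only [one_mul] using (entryMap_mul hψ (ho i) h 1 r).symm
  have hb : IsUnit b := Pi.isUnit_iff.2 fun j => by
    obtain ⟨s, hs⟩ := (entryMap_bijective hψ (ho j)).2 1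
    exact isUnit_iff_exists_and_exists.2
      ⟨⟨_, (hbi j j le_rfl s).trans hs⟩, ⟨α s, (hαb j s).symm.trans hs⟩⟩
  refine ⟨Units.map (diagonal : (Fin n → R) →+* 𝒯) hb.unit⁻¹, α, fun A => ?_⟩
  ext i j
  rw [Units.coe_map, Units.coe_map_inv, inv_inv]
  change (ψ A).1 i j = (diagonal _ * _ * diagonal _ : 𝒯).1 i j
  rw [diagonal_mul_mul_diagonal_apply, IsUnit.unit_spec]
  rcases le_or_gt i j with h | h
  · have hinv : (↑hb.unit⁻¹ : Fin n → R) i * b i = 1 := congrFun hb.val_inv_mul i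
    rw [apply_eq_entryMap hψ h, ← one_mul (entryMap ψ i j h _), ← hinv, mul_assoc, hbi, hαb,
      ← mul_assoc]
    rfl
  · rw [(ψ A).2 h, (entrywiseMap T R n α A).2 h, mul_zero, zero_mul]

end FixingDiagIdem

end triangularSubalgebra

open triangularSubalgebra in
/-- If `R` is a normal `T`-algebra (all idempotents are central), every `T`-algebra
automorphism of the upper triangular matrix algebra `T(n,R)` is a product of an inner
automorphism and a ring automorphism. -/
theorem stmt12 (T R : Type*) [CommRing T] [Ring R] [Algebra T R] (n : ℕ) (hn : 1 ≤ n)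
    (hnormal : ∀ e : R, e * e = e → ∀ r : R, e * r = r * e)
    (φ : triangularSubalgebra T R n ≃ₐ[T] triangularSubalgebra T R n) :
    ∃ (u : (triangularSubalgebra T R n)ˣ) (α : R ≃ₐ[T] R),
      ∀ A : triangularSubalgebra T R n,
        φ A = ↑u * entrywiseMap T R n α A * ↑u⁻¹ := by
  obtain ⟨u, hu⟩ := exists_unit_conj_eq_diagonal_diag
    (completeOrthogonalIdempotents_diagIdem.map φ.toRingEquiv.toRingHom)
  let ψ := φ.trans (MulSemiringAction.toAlgEquiv T _ (ConjAct.toConjAct u))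
  have hψ_apply (A) : ψ A = ↑u * φ A * ↑u⁻¹ := ConjAct.units_smul_def _ _
  have hψ : ∀ i, ψ (diagIdem i) = diagIdem i :=
    map_diagIdem_eq_diagIdem hnormal ψ.toRingEquiv fun i => ⟨_, (hψ_apply _).trans (hu i)⟩
  obtain ⟨V, α, hV⟩ := exists_unit_eq_conj_entrywiseMap hψ hn
  refine ⟨u⁻¹ * V, α, fun A => ?_⟩
  calc φ A = ↑u⁻¹ * ψ A * ↑u := by simp [hψ_apply, mul_assoc]
    _ = ↑(u⁻¹ * V) * entrywiseMap T R n α A * ↑(u⁻¹ * V)⁻¹ := by simp [hV, mul_assoc]
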